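/- Let (S, f) be a Frobenius GNS in ℕ_0^d. Then S is almost symmetric if and only if there exist an irreducible GNS T with Frobenius element f and a set A of minimal generators of T such that S = T ∖ A and PF(S) = PF(T) ∪ {x : x ∈ A} ∪ {f − x : x ∈ A}. In this case t(S) = 2|A| + t(T). -/

import Mathlib

open scoped BigOperators

/-- A generalized numerical semigroup: a submonoid of `ℕ^d` with finite complement. -/
def IsGNS {d : ℕ} (S : Set (Fin d → ℕ)) : Prop :=
  (0 : Fin d → ℕ) ∈ S ∧ (∀ x y : Fin d → ℕ, x ∈ S → y ∈ S → x + y ∈ S) ∧ Sᶜ.Finite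

/-- The genus: number of gaps. -/
noncomputable def genus {d : ℕ} (S : Set (Fin d → ℕ)) : ℕ := Sᶜ.ncard

/-- Pseudo-Frobenius elements. -/
def PF {d : ℕ} (S : Set (Fin d → ℕ)) : Set (Fin d → ℕ) :=
  {h | h ∉ S ∧ ∀ s ∈ S, s ≠ 0 → h + s ∈ S}

/-- The type: number of pseudo-Frobenius elements. -/
noncomputable def typ {d : ℕ} (S : Set (Fin d → ℕ)) : ℕ := (PF S).ncard

/-- Maximal elements of a set with respect to a relation. -/
def Maximals {α : Type*} (le : α → α → Prop) (X : Set α) : Set α :=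
  {x ∈ X | ∀ y ∈ X, le x y → x = y}

/-- `f` is the unique maximal element of the set of gaps w.r.t. the componentwise order. -/
def IsFrobenius {d : ℕ} (S : Set (Fin d → ℕ)) (f : Fin d → ℕ) : Prop :=
  Maximals (· ≤ ·) Sᶜ = {f}

/-- Almost symmetric: `2 g(S) + 1 - t(S) = ∏ (h i + 1)` for some gap `h`. -/
def AlmostSymmetric {d : ℕ} (S : Set (Fin d → ℕ)) : Prop :=
  ∃ h ∉ S, 2 * genus S + 1 = typ S + ∏ i, (h i + 1)

/-- Special gaps. -/
def SG {d : ℕ} (S : Set (Fin d → ℕ)) : Set (Fin d → ℕ) :=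
  {h ∈ PF S | h + h ∈ S}

/-- The partial order `≤_S` : `y ≤_S x` iff `x - y ∈ S`. -/
def leS {d : ℕ} (S : Set (Fin d → ℕ)) (x y : Fin d → ℕ) : Prop :=
  ∃ s ∈ S, x + s = y

/-- The Apéry set of `S` with respect to `n`. -/
def Ap {d : ℕ} (S : Set (Fin d → ℕ)) (n : Fin d → ℕ) : Set (Fin d → ℕ) :=
  {s ∈ S | ¬ ∃ u ∈ S, u + n = s}

/-- The reduced Apéry set of `S` with respect to `n`. -/
def Cred {d : ℕ} (S : Set (Fin d → ℕ)) (n : Fin d → ℕ) : Set (Fin d → ℕ) :=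
  {s ∈ Ap S n | ∃ h, h ∉ S ∧ s ≤ h + n}

/-- A monomial order on `ℕ^d` given by its strict-order relation. -/
def IsMonomialOrder (d : ℕ) (lt : (Fin d → ℕ) → (Fin d → ℕ) → Prop) : Prop :=
  (∀ a, ¬ lt a a) ∧ (∀ a b c, lt a b → lt b c → lt a c) ∧
  (∀ a b, a ≠ b → lt a b ∨ lt b a) ∧
  (∀ u a b, lt a b → lt (a + u) (b + u)) ∧
  (∀ a, a ≠ (0 : Fin d → ℕ) → lt 0 a)

/-- Minimal generator of a GNS. -/
def IsMinGen {d : ℕ} (S : Set (Fin d → ℕ)) (x : Fin d → ℕ) : Prop :=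
  x ∈ S ∧ x ≠ 0 ∧ ∀ y ∈ S, ∀ z ∈ S, y ≠ 0 → z ≠ 0 → y + z ≠ x

/-- Irreducible GNS: not an intersection of two GNSs properly containing it. -/
def GNSIrreducible {d : ℕ} (S : Set (Fin d → ℕ)) : Prop :=
  ¬ ∃ S₁ S₂ : Set (Fin d → ℕ), IsGNS S₁ ∧ IsGNS S₂ ∧ S ⊂ S₁ ∧ S ⊂ S₂ ∧ S = S₁ ∩ S₂

/-- Pseudo-symmetric: `PF S = {f, f/2}`. -/
def PseudoSymmetric {d : ℕ} (S : Set (Fin d → ℕ)) : Prop :=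
  ∃ f q : Fin d → ℕ, f ≠ q ∧ q + q = f ∧ PF S = {f, q}

/-!
Write `M(S)` for the gaps `h` of `S` such that `f - h` is a gap too. The gaps and their
reflections `f - h` cover the box `[0, f]` and meet in `M(S)`, so `2 g(S) = |f + 1|_× + |M(S)|`;
since `PF(S) ⊆ {f} ∪ M(S)`, `S` is almost symmetric iff `PF(S) = {f} ∪ M(S)`.

A GNS `T` with Frobenius element `f` is irreducible iff `f` is its only special gap, and then
`M(T) ⊆ PF(T)`. For almost symmetric `S`, adjoin to `S` the lexicographically larger element of
each pair `{h, f - h} ⊆ M(S)` with `h ≠ f - h`. The lexicographic order is a monomial order, so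
two adjoined elements `a, b` satisfy `2f < 2(a + b)` lexicographically, whence `a + b ≰ f` and
`a + b ∈ S`. Hence the result `T` is a GNS, the adjoined elements are minimal generators of `T`,
and every `h ∈ M(T)` satisfies `2h = f`, which makes `f` the only special gap of `T`. Conversely, given `T` and `A`, every `h ∈ M(S)` lies in `A`, in
`f - A` or in `M(T) ⊆ PF(T)`. Finally `PF(T)`, `A` and `f - A` are pairwise disjoint, which
gives `t(S) = 2|A| + t(T)`.
-/

section

variable {α : Type*} [AddCommMonoid α] [PartialOrder α] [CanonicallyOrderedAdd α]

theorem eq_zero_of_maximal_of_add_mem [AddLeftReflectLE α] {X : Set α} {m s : α}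
    (hm : Maximal (· ∈ X) m) (hms : m + s ∈ X) : s = 0 :=
  nonpos_iff_eq_zero.1 <| (add_le_iff_nonpos_right m).1 (hm.2 hms le_self_add)

theorem tsub_add_eq_tsub_of_add_le [Sub α] [OrderedSub α] [AddLeftReflectLE α] {a b c : α}
    (h : a + b ≤ c) : c - (a + b) + b = c - a := by
  rw [tsub_add_eq_tsub_tsub, tsub_add_cancel_of_le (le_tsub_of_add_le_left h)]

end

variable {d : ℕ} {S T A : Set (Fin d → ℕ)} {f h : Fin d → ℕ}

theorem IsGNS.PF_finite (hS : IsGNS S) : (PF S).Finite :=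
  hS.2.2.subset fun _ hh => hh.1

theorem IsFrobenius.notMem (hf : IsFrobenius S f) : f ∉ S :=
  (hf.symm ▸ rfl : f ∈ Maximals (· ≤ ·) Sᶜ).1

theorem IsFrobenius.le_of_notMem (hS : IsGNS S) (hf : IsFrobenius S f) (hh : h ∉ S) :
    h ≤ f := by
  obtain ⟨m, hhm, hm⟩ := hS.2.2.exists_le_maximal hh
  have : m ∈ Maximals (· ≤ ·) Sᶜ := ⟨hm.1, fun y hy hle => hm.eq_of_le hy hle⟩
  rw [hf] at this
  exact this ▸ hhm

theorem IsFrobenius.add_mem (hS : IsGNS S) (hf : IsFrobenius S f) {s : Fin d → ℕ}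
    (hs0 : s ≠ 0) : f + s ∈ S := by
  by_contra hfs
  exact hs0 <| nonpos_iff_eq_zero.1 <| (add_le_iff_nonpos_right f).1 (hf.le_of_notMem hS hfs)

theorem IsFrobenius.mem_PF (hS : IsGNS S) (hf : IsFrobenius S f) : f ∈ PF S :=
  ⟨hf.notMem, fun _ _ hs0 => hf.add_mem hS hs0⟩

theorem IsFrobenius.mem_SG (hS : IsGNS S) (hf : IsFrobenius S f) : f ∈ SG S :=
  ⟨hf.mem_PF hS, hf.add_mem hS fun hf0 => hf.notMem (hf0 ▸ hS.1)⟩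

theorem IsFrobenius.of_compl_subset (hS : IsGNS S) (hf : IsFrobenius S f) (hTS : Tᶜ ⊆ Sᶜ)
    (hfT : f ∉ T) : IsFrobenius T f := by
  ext x
  simp only [Maximals, Set.mem_singleton_iff, Set.mem_compl_iff]
  constructor
  · rintro ⟨hx, hmax⟩
    exact hmax f hfT (hf.le_of_notMem hS (hTS hx))
  · rintro rfl
    exact ⟨hfT, fun y hy hle => le_antisymm hle (hf.le_of_notMem hS (hTS hy))⟩

theorem add_mem_of_mem_union (hS : IsGNS S) (hA : A ⊆ PF S)
    (hAA : ∀ a ∈ A, ∀ b ∈ A, a + b ∈ S) {x y : Fin d → ℕ} (hx : x ∈ S ∪ A) (hy : y ∈ S ∪ A)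
    (hx0 : x ≠ 0) (hy0 : y ≠ 0) : x + y ∈ S := by
  rcases hx with hx | hx <;> rcases hy with hy | hy
  · exact hS.2.1 x y hx hy
  · exact add_comm x y ▸ (hA hy).2 x hx hx0
  · exact (hA hx).2 y hy hy0
  · exact hAA x hx y hy

theorem isGNS_union (hS : IsGNS S) (hA : A ⊆ PF S) (hAA : ∀ a ∈ A, ∀ b ∈ A, a + b ∈ S) :
    IsGNS (S ∪ A) := by
  refine ⟨Or.inl hS.1, fun x y hx hy => ?_, hS.2.2.subset (by simp)⟩
  rcases eq_or_ne x 0 with rfl | hx0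
  · simpa using hy
  rcases eq_or_ne y 0 with rfl | hy0
  · simpa using hx
  exact Or.inl (add_mem_of_mem_union hS hA hAA hx hy hx0 hy0)

theorem isMinGen_of_mem_union (hS : IsGNS S) (hA : A ⊆ PF S)
    (hAA : ∀ a ∈ A, ∀ b ∈ A, a + b ∈ S) {a : Fin d → ℕ} (ha : a ∈ A) : IsMinGen (S ∪ A) a :=
  ⟨Or.inr ha, fun ha0 => (hA ha).1 (ha0 ▸ hS.1), fun _ hy _ hz hy0 hz0 hyz =>
    (hA ha).1 (hyz ▸ add_mem_of_mem_union hS hA hAA hy hz hy0 hz0)⟩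

theorem IsGNS.insert_of_mem_SG {g : Fin d → ℕ} (hS : IsGNS S) (hg : g ∈ SG S) :
    IsGNS (insert g S) := by
  rw [← Set.union_singleton]
  exact isGNS_union hS (by simpa using hg.1) (by simpa using hg.2)

theorem exists_mem_SG_of_ssubset (hT : IsGNS T) (hS : IsGNS S) (hTS : T ⊂ S) :
    ∃ g ∈ SG T, g ∈ S := by
  obtain ⟨x, hx⟩ := Set.exists_of_ssubset hTS
  obtain ⟨m, -, hm⟩ := (hT.2.2.subset fun _ hy => hy.2 : (S \ T).Finite).exists_le_maximal hx
  have hm0 : m ≠ 0 := fun h0 => hm.1.2 (h0 ▸ hT.1)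
  have hmem : ∀ s ∈ S, m + s ∉ T → s = 0 := fun s hs hms =>
    eq_zero_of_maximal_of_add_mem hm ⟨hS.2.1 m s hm.1.1 hs, hms⟩
  refine ⟨m, ⟨⟨hm.1.2, fun s hs hs0 => ?_⟩, ?_⟩, hm.1.1⟩
  · exact not_not.1 fun hms => hs0 (hmem s (hTS.1 hs) hms)
  · exact not_not.1 fun hmm => hm0 (hmem m hm.1.1 hmm)

theorem gnsIrreducible_iff_SG_eq_singleton (hT : IsGNS T) (hfT : IsFrobenius T f) :
    GNSIrreducible T ↔ SG T = {f} := by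
  constructor
  · refine fun hirr => Set.eq_singleton_iff_unique_mem.2 ⟨hfT.mem_SG hT, fun g hg => ?_⟩
    by_contra hgf
    refine hirr ⟨insert g T, insert f T, hT.insert_of_mem_SG hg, hT.insert_of_mem_SG
      (hfT.mem_SG hT), Set.ssubset_insert hg.1.1, Set.ssubset_insert hfT.notMem, ?_⟩
    ext x
    simp only [Set.mem_inter_iff, Set.mem_insert_iff]
    constructor
    · exact fun hx => ⟨Or.inr hx, Or.inr hx⟩
    · rintro ⟨rfl | hx, rfl | hx'⟩
      · exact absurd rfl hgf
      · exact hx'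
      all_goals exact hx
  · rintro hSG ⟨T₁, T₂, hT₁, hT₂, hTT₁, hTT₂, rfl⟩
    obtain ⟨g₁, hg₁, hgT₁⟩ := exists_mem_SG_of_ssubset hT hT₁ hTT₁
    obtain ⟨g₂, hg₂, hgT₂⟩ := exists_mem_SG_of_ssubset hT hT₂ hTT₂
    rw [hSG] at hg₁ hg₂
    exact hfT.notMem ⟨hg₁ ▸ hgT₁, hg₂ ▸ hgT₂⟩

theorem ncard_Iic_eq_prod (f : Fin d → ℕ) : (Set.Iic f).ncard = ∏ i, (f i + 1) := by
  rw [← Finset.coe_Iic, Set.ncard_coe_finset, Pi.card_Iic]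
  simp

def dualGaps (S : Set (Fin d → ℕ)) (f : Fin d → ℕ) : Set (Fin d → ℕ) :=
  {h | h ∉ S ∧ f - h ∉ S}

theorem dualGaps_finite (hS : IsGNS S) : (dualGaps S f).Finite :=
  hS.2.2.subset fun _ hh => hh.1

theorem dualGaps_anti (hST : S ⊆ T) : dualGaps T f ⊆ dualGaps S f :=
  fun _ hh => ⟨fun h => hh.1 (hST h), fun h => hh.2 (hST h)⟩

theorem notMem_dualGaps_self (hS : IsGNS S) : f ∉ dualGaps S f :=
  fun hf => hf.2 (by simpa using hS.1)

theorem sub_mem_dualGaps (hS : IsGNS S) (hf : IsFrobenius S f) (hh : h ∈ dualGaps S f) :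
    f - h ∈ dualGaps S f :=
  ⟨hh.2, by rw [tsub_tsub_cancel_of_le (hf.le_of_notMem hS hh.1)]; exact hh.1⟩

theorem PF_subset_insert_dualGaps (hS : IsGNS S) (hf : IsFrobenius S f) :
    PF S ⊆ insert f (dualGaps S f) := by
  intro h hh
  rw [Set.mem_insert_iff, or_iff_not_imp_left]
  intro hhf
  have hle := hf.le_of_notMem hS hh.1
  have hfh0 : f - h ≠ 0 := fun h0 => hhf (le_antisymm hle (tsub_eq_zero_iff_le.1 h0))
  exact ⟨hh.1, fun hfh => hf.notMem (add_tsub_cancel_of_le hle ▸ hh.2 _ hfh hfh0)⟩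

theorem two_mul_genus (hS : IsGNS S) (hf : IsFrobenius S f) :
    2 * genus S = ∏ i, (f i + 1) + (dualGaps S f).ncard := by
  have hG : Sᶜ ⊆ Set.Iic f := fun _ hh => hf.le_of_notMem hS hh
  have mem_image : ∀ x ≤ f, x ∈ (f - ·) '' Sᶜ ↔ f - x ∉ S := fun x hx =>
    ⟨by rintro ⟨y, hy, rfl⟩; rwa [tsub_tsub_cancel_of_le (hG hy)],
      fun hfx => ⟨f - x, hfx, tsub_tsub_cancel_of_le hx⟩⟩
  have hunion : Sᶜ ∪ (f - ·) '' Sᶜ = Set.Iic f := by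
    refine subset_antisymm (Set.union_subset hG ?_) fun x (hx : x ≤ f) => ?_
    · rintro _ ⟨y, -, rfl⟩
      exact Set.mem_Iic.2 tsub_le_self
    · rw [Set.mem_union, or_iff_not_imp_left, Set.mem_compl_iff, not_not, mem_image x hx]
      intro hxS hfx
      exact hf.notMem (tsub_add_cancel_of_le hx ▸ hS.2.1 _ _ hfx hxS)
  have hinter : Sᶜ ∩ (f - ·) '' Sᶜ = dualGaps S f := by
    ext x
    exact and_congr_right fun hx => mem_image x (hG hx)
  have hcard : ((f - ·) '' Sᶜ).ncard = genus S :=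
    Set.InjOn.ncard_image fun _ hx _ hy => tsub_inj_right (hG hx) (hG hy)
  have := Set.ncard_union_add_ncard_inter Sᶜ ((f - ·) '' Sᶜ) hS.2.2 (hS.2.2.image _)
  rw [hunion, hinter, ncard_Iic_eq_prod, hcard] at this
  rw [genus] at *
  omega

theorem almostSymmetric_iff_PF_eq_insert (hS : IsGNS S) (hf : IsFrobenius S f) :
    AlmostSymmetric S ↔ PF S = insert f (dualGaps S f) := by
  have hcard : (insert f (dualGaps S f)).ncard = (dualGaps S f).ncard + 1 :=
    Set.ncard_insert_of_notMem (notMem_dualGaps_self hS) (dualGaps_finite hS)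
  have hcount := two_mul_genus hS hf
  constructor
  · rintro ⟨h, hh, heq⟩
    have hprod : ∏ i, (h i + 1) ≤ ∏ i, (f i + 1) :=
      Finset.prod_le_prod' fun i _ => Nat.succ_le_succ (hf.le_of_notMem hS hh i)
    exact Set.eq_of_subset_of_ncard_le (PF_subset_insert_dualGaps hS hf)
      (by rw [hcard, typ] at *; omega) ((dualGaps_finite hS).insert f)
  · intro hPF
    refine ⟨f, hf.notMem, ?_⟩
    rw [typ, hPF, hcard]
    omega

/-- If `m` is a maximal dual gap outside `PF T`, the dual gaps of the form `m + x` with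
`0 ≠ x ∈ T` lie in `PF T`, hence are not special and so are closed under doubling;
a nonempty finite set of nonzero vectors cannot be. -/
theorem dualGaps_subset_PF_of_SG_eq_singleton (hT : IsGNS T) (hfT : IsFrobenius T f)
    (hSG : SG T = {f}) : dualGaps T f ⊆ PF T := by
  by_contra hsub
  obtain ⟨h, hhM, hhPF⟩ := Set.not_subset.1 hsub
  obtain ⟨m, -, hm⟩ := ((dualGaps_finite hT).sdiff (t := PF T)).exists_le_maximal ⟨hhM, hhPF⟩
  set N := {v ∈ dualGaps T f | ∃ x ∈ T, x ≠ 0 ∧ m + x = v}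
  have hN_PF : ∀ v ∈ N, v ∈ PF T := by
    rintro _ ⟨hvM, x, -, hx0, rfl⟩
    by_contra hv
    exact hx0 (eq_zero_of_maximal_of_add_mem hm ⟨hvM, hv⟩)
  have hN_double : ∀ v ∈ N, v + v ∈ N := by
    intro v hv
    have hvPF := hN_PF v hv
    obtain ⟨hvM, x, hxT, hx0, rfl⟩ := hv
    set v := m + x
    have hxv : x + v ∈ T := add_comm v x ▸ hvPF.2 x hxT hx0
    have hvv : m + (x + v) = v + v := (add_assoc m x v).symm
    have hvvT : v + v ∉ T := fun hvvT => notMem_dualGaps_self hT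
      ((Set.eq_singleton_iff_unique_mem.1 hSG).2 v ⟨hvPF, hvvT⟩ ▸ hvM)
    refine ⟨⟨hvvT, fun hfvv => ?_⟩, x + v, hxv, fun h0 => hx0 (add_eq_zero.1 h0).1, hvv⟩
    have hle := hfT.le_of_notMem hT hvvT
    by_cases h0 : f - (v + v) = 0
    · have hf : f = m + (x + v) := hvv ▸ le_antisymm (tsub_eq_zero_iff_le.1 h0) hle
      exact hm.1.1.2 (by rwa [hf, add_tsub_cancel_left])
    · have hvfvv := hvPF.2 _ hfvv h0
      rw [add_comm, tsub_add_eq_tsub_of_add_le hle] at hvfvv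
      exact hvM.2 hvfvv
  obtain ⟨s, hsT, hs0, hms⟩ : ∃ s ∈ T, s ≠ 0 ∧ m + s ∉ T := by
    by_contra! hc
    exact hm.1.2 ⟨hm.1.1.1, hc⟩
  have hmsN : m + s ∈ N := by
    refine ⟨⟨hms, fun hfms => hm.1.1.2 ?_⟩, s, hsT, hs0, rfl⟩
    rw [← tsub_add_eq_tsub_of_add_le (hfT.le_of_notMem hT hms)]
    exact hT.2.1 _ _ hfms hsT
  obtain ⟨v, -, hv⟩ := ((dualGaps_finite hT).subset (Set.sep_subset _ _)).exists_le_maximal hmsN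
  have hv0 := eq_zero_of_maximal_of_add_mem hv (hN_double v hv.1)
  exact hv.1.1.1 (hv0 ▸ hT.1)

theorem SG_eq_singleton_of_forall_dualGaps (hT : IsGNS T) (hfT : IsFrobenius T f)
    (hM : ∀ h ∈ dualGaps T f, h + h = f) : SG T = {f} := by
  refine Set.eq_singleton_iff_unique_mem.2 ⟨hfT.mem_SG hT, fun h hh => ?_⟩
  rcases PF_subset_insert_dualGaps hT hfT hh.1 with hhf | hhM
  · exact hhf
  · exact absurd (hM h hhM ▸ hh.2) hfT.notMem

theorem toLex_lt_sub_add_sub_iff (hh : h ≤ f) :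
    toLex f < toLex ((f - h) + (f - h)) ↔ toLex (h + h) < toLex f := by
  have hf : toLex f = toLex (f - h) + toLex h := by rw [← toLex_add, tsub_add_cancel_of_le hh]
  rw [toLex_add, toLex_add, hf, add_lt_add_iff_left, add_lt_add_iff_right]

/-- Of each pair `{h, f - h}` of distinct dual gaps, the member that is larger in the
lexicographic order. -/
def upperDualGaps (S : Set (Fin d → ℕ)) (f : Fin d → ℕ) : Set (Fin d → ℕ) :=
  {h ∈ dualGaps S f | toLex f < toLex (h + h)}

theorem add_mem_of_mem_upperDualGaps (hS : IsGNS S) (hf : IsFrobenius S f) {a b : Fin d → ℕ}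
    (ha : a ∈ upperDualGaps S f) (hb : b ∈ upperDualGaps S f) : a + b ∈ S := by
  by_contra hab
  have hle := hf.le_of_notMem hS hab
  have hlt : toLex (f + f) < toLex ((a + a) + (b + b)) := add_lt_add ha.2 hb.2
  rw [add_add_add_comm] at hlt
  exact hlt.not_ge (Pi.toLex_monotone (add_le_add hle hle))

theorem add_self_eq_of_mem_dualGaps_union (hS : IsGNS S) (hf : IsFrobenius S f)
    (hh : h ∈ dualGaps (S ∪ upperDualGaps S f) f) : h + h = f := by
  have hhM : h ∈ dualGaps S f := dualGaps_anti Set.subset_union_left hh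
  have hle : toLex (h + h) ≤ toLex f := not_lt.1 fun hlt => hh.1 (Or.inr ⟨hhM, hlt⟩)
  have hge : toLex f ≤ toLex (h + h) := not_lt.1 fun hlt => hh.2 (Or.inr
    ⟨sub_mem_dualGaps hS hf hhM, (toLex_lt_sub_add_sub_iff (hf.le_of_notMem hS hhM.1)).2 hlt⟩)
  exact toLex_inj.1 (le_antisymm hle hge)

theorem PF_eq_PF_union_upperDualGaps (hS : IsGNS S) (hf : IsFrobenius S f)
    (hPF : PF S = insert f (dualGaps S f)) (hT : IsGNS (S ∪ upperDualGaps S f))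
    (hfT : IsFrobenius (S ∪ upperDualGaps S f) f) (hSG : SG (S ∪ upperDualGaps S f) = {f}) :
    PF S = PF (S ∪ upperDualGaps S f) ∪ upperDualGaps S f ∪
      (fun x => f - x) '' upperDualGaps S f := by
  rw [hPF]
  apply subset_antisymm
  · refine Set.insert_subset (Or.inl (Or.inl (hfT.mem_PF hT))) fun h hh => ?_
    have hle := hf.le_of_notMem hS hh.1
    rcases lt_trichotomy (toLex f) (toLex (h + h)) with hlt | heq | hgt
    · exact Or.inl (Or.inr ⟨hh, hlt⟩)
    · refine Or.inl (Or.inl (dualGaps_subset_PF_of_SG_eq_singleton hT hfT hSG ?_))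
      have hhT : h ∉ S ∪ upperDualGaps S f := fun hhT => hhT.elim hh.1 fun hhA => hhA.2.ne heq
      have hfh : f - h = h := by rw [toLex_inj.1 heq, add_tsub_cancel_right]
      exact ⟨hhT, by rwa [hfh]⟩
    · exact Or.inr ⟨f - h, ⟨sub_mem_dualGaps hS hf hh, (toLex_lt_sub_add_sub_iff hle).2 hgt⟩,
        tsub_tsub_cancel_of_le hle⟩
  · rintro h ((hh | hh) | ⟨a, ha, rfl⟩)
    · exact Set.insert_subset_insert (dualGaps_anti Set.subset_union_left)
        (PF_subset_insert_dualGaps hT hfT hh)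
    · exact Or.inr hh.1
    · exact Or.inr (sub_mem_dualGaps hS hf ha.1)

theorem exists_decomposition_of_almostSymmetric (hS : IsGNS S) (hf : IsFrobenius S f)
    (hAS : AlmostSymmetric S) :
    ∃ T A : Set (Fin d → ℕ), IsGNS T ∧ GNSIrreducible T ∧ IsFrobenius T f ∧
      (∀ x ∈ A, IsMinGen T x) ∧ S = T \ A ∧ PF S = PF T ∪ A ∪ (fun x => f - x) '' A := by
  have hPF := (almostSymmetric_iff_PF_eq_insert hS hf).1 hAS
  have hAPF : upperDualGaps S f ⊆ PF S := fun h hh => hPF ▸ Or.inr hh.1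
  have hAA : ∀ a ∈ upperDualGaps S f, ∀ b ∈ upperDualGaps S f, a + b ∈ S :=
    fun a ha b hb => add_mem_of_mem_upperDualGaps hS hf ha hb
  have hT := isGNS_union hS hAPF hAA
  have hfT : IsFrobenius (S ∪ upperDualGaps S f) f :=
    hf.of_compl_subset hS (Set.compl_subset_compl.2 Set.subset_union_left)
      fun hfT => hfT.elim hf.notMem fun hfA => notMem_dualGaps_self hS hfA.1
  have hSG := SG_eq_singleton_of_forall_dualGaps hT hfT
    fun h hh => add_self_eq_of_mem_dualGaps_union hS hf hh
  refine ⟨_, _, hT, (gnsIrreducible_iff_SG_eq_singleton hT hfT).2 hSG, hfT,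
    fun a ha => isMinGen_of_mem_union hS hAPF hAA ha, ?_,
    PF_eq_PF_union_upperDualGaps hS hf hPF hT hfT hSG⟩
  exact (Set.union_sdiff_cancel_right fun h hh => hh.2.1.1 hh.1).symm

theorem almostSymmetric_of_PF_eq (hS : IsGNS S) (hf : IsFrobenius S f) (hT : IsGNS T)
    (hirr : GNSIrreducible T) (hfT : IsFrobenius T f) (hAT : A ⊆ T) (hSTA : S = T \ A)
    (hPF : PF S = PF T ∪ A ∪ (fun x => f - x) '' A) : AlmostSymmetric S := by
  rw [almostSymmetric_iff_PF_eq_insert hS hf]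
  refine subset_antisymm (PF_subset_insert_dualGaps hS hf)
    (Set.insert_subset (hf.mem_PF hS) fun h hh => ?_)
  rw [hPF]
  by_cases hhA : h ∈ A
  · exact Or.inl (Or.inr hhA)
  by_cases hfhA : f - h ∈ A
  · exact Or.inr ⟨f - h, hfhA, tsub_tsub_cancel_of_le (hf.le_of_notMem hS hh.1)⟩
  have hTSA : T = S ∪ A := by rw [hSTA, Set.sdiff_union_of_subset hAT]
  refine Or.inl (Or.inl (dualGaps_subset_PF_of_SG_eq_singleton hT hfT
    ((gnsIrreducible_iff_SG_eq_singleton hT hfT).1 hirr) ?_))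
  rw [hTSA]
  exact ⟨fun h' => h'.elim hh.1 hhA, fun h' => h'.elim hh.2 hfhA⟩

theorem ncard_PF_union_eq (hT : IsGNS T) (hfT : IsFrobenius T f) (hAT : A ⊆ T) (hA0 : 0 ∉ A)
    (hAf : A ⊆ Set.Iic f) (hAfin : A.Finite) :
    (PF T ∪ A ∪ (fun x => f - x) '' A).ncard = 2 * A.ncard + typ T := by
  have hsum : ∀ x ∈ A, f - x + x ∉ T := fun x hx =>
    (tsub_add_cancel_of_le (Set.mem_Iic.1 (hAf hx))).symm ▸ hfT.notMem
  have hdisj₁ : Disjoint (PF T) A := Set.disjoint_left.2 fun _ hx hxA => hx.1 (hAT hxA)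
  have hdisj₂ : Disjoint (PF T ∪ A) ((fun x => f - x) '' A) := by
    refine Set.disjoint_union_left.2 ⟨Set.disjoint_left.2 ?_, Set.disjoint_left.2 ?_⟩
    · rintro _ hy ⟨x, hx, rfl⟩
      exact hsum x hx (hy.2 x (hAT hx) (ne_of_mem_of_not_mem hx hA0))
    · rintro _ hy ⟨x, hx, rfl⟩
      exact hsum x hx (hT.2.1 _ _ (hAT hy) (hAT hx))
  rw [Set.ncard_union_eq hdisj₂ (hT.PF_finite.union hAfin) (hAfin.image _),
    Set.ncard_union_eq hdisj₁ hT.PF_finite hAfin,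
    Set.InjOn.ncard_image fun _ hx _ hy => tsub_inj_right (hAf hx) (hAf hy), typ]
  ring

theorem statement18_general (d : ℕ) (S : Set (Fin d → ℕ)) (hS : IsGNS S)
    (f : Fin d → ℕ) (hf : IsFrobenius S f) :
    (AlmostSymmetric S ↔
      ∃ (T : Set (Fin d → ℕ)) (A : Set (Fin d → ℕ)),
        IsGNS T ∧ GNSIrreducible T ∧ IsFrobenius T f ∧
        (∀ x ∈ A, IsMinGen T x) ∧ S = T \ A ∧
        PF S = PF T ∪ A ∪ (fun x => f - x) '' A) ∧
    (∀ (T : Set (Fin d → ℕ)) (A : Set (Fin d → ℕ)),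
        IsGNS T → GNSIrreducible T → IsFrobenius T f →
        (∀ x ∈ A, IsMinGen T x) → S = T \ A →
        PF S = PF T ∪ A ∪ (fun x => f - x) '' A →
        typ S = 2 * A.ncard + typ T) := by
  refine ⟨⟨exists_decomposition_of_almostSymmetric hS hf, ?_⟩, ?_⟩
  · rintro ⟨T, A, hT, hirr, hfT, hA, hSTA, hPF⟩
    exact almostSymmetric_of_PF_eq hS hf hT hirr hfT (fun x hx => (hA x hx).1) hSTA hPF
  · intro T A hT _ hfT hA _ hPF
    have hAS : A ⊆ Sᶜ := fun x hx => (hPF ▸ Or.inl (Or.inr hx) : x ∈ PF S).1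
    rw [typ, hPF]
    exact ncard_PF_union_eq hT hfT (fun x hx => (hA x hx).1) (fun h0 => (hA 0 h0).2.1 rfl)
      (fun x hx => hf.le_of_notMem hS (hAS hx)) (hS.2.2.subset hAS)

/-- a Frobenius GNS `(S,f)` is almost symmetric iff `S = T ∖ A` for an
irreducible GNS `T` with Frobenius element `f` and a set `A` of minimal generators of `T`
with `PF(S) = PF(T) ∪ A ∪ (f - A)`; in that case `t(S) = 2|A| + t(T)`. -/
theorem statement18 (d : ℕ) (hd : 0 < d) (S : Set (Fin d → ℕ)) (hS : IsGNS S)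
    (f : Fin d → ℕ) (hf : IsFrobenius S f) :
    (AlmostSymmetric S ↔
      ∃ (T : Set (Fin d → ℕ)) (A : Set (Fin d → ℕ)),
        IsGNS T ∧ GNSIrreducible T ∧ IsFrobenius T f ∧
        (∀ x ∈ A, IsMinGen T x) ∧ S = T \ A ∧
        PF S = PF T ∪ A ∪ (fun x => f - x) '' A) ∧
    (∀ (T : Set (Fin d → ℕ)) (A : Set (Fin d → ℕ)),
        IsGNS T → GNSIrreducible T → IsFrobenius T f →
        (∀ x ∈ A, IsMinGen T x) → S = T \ A →
        PF S = PF T ∪ A ∪ (fun x => f - x) '' A →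
        typ S = 2 * A.ncard + typ T) :=
  statement18_general d S hS f hf
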